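/- arXiv:1710.02379 — 2 statements merged into one kernel-verified Lean document; each statement's English description precedes it below -/
import Mathlib

section
/- Let R be a (possibly noncommutative) ring, let e ∈ R and let N ≥ 1 be a natural number such that (e^2 − e)^N = 0. Then the element E := (1 − (1 − e)^N)^N satisfies: E − e is nilpotent. -/
open Polynomial

/-- If `(e^2 - e)^N = 0` in a (possibly noncommutative) ring, then
`E := (1 - (1 - e)^N)^N` differs from `e` by a nilpotent element. -/
theorem stmt_1 {R : Type*} [Ring R] (e : R) (N : ℕ) (hN : 1 ≤ N)
    (h : (e ^ 2 - e) ^ N = 0) :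
    IsNilpotent ((1 - (1 - e) ^ N) ^ N - e) := by
  set p : Polynomial ℤ := (1 - (1 - X) ^ N) ^ N - X with hp
  have hNne : N ≠ 0 := by omega
  have hdvd : (X ^ 2 - X : Polynomial ℤ) ∣ p := by
    have h0 : (X : Polynomial ℤ) ∣ p := by
      rw [Polynomial.X_dvd_iff, Polynomial.coeff_zero_eq_eval_zero]
      simp [hp, hNne]
    have h1 : (X - 1 : Polynomial ℤ) ∣ p := by
      have := (Polynomial.dvd_iff_isRoot (p := p) (a := (1 : ℤ))).mpr
      simpa using this (by simp [hp, Polynomial.IsRoot, hNne])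
    have hcop : IsCoprime (X : Polynomial ℤ) (X - 1) := by
      refine ⟨1, -1, by ring⟩
    have := hcop.mul_dvd h0 h1
    have heq : (X ^ 2 - X : Polynomial ℤ) = X * (X - 1) := by ring
    rwa [heq]
  obtain ⟨g, hg⟩ := hdvd
  refine ⟨N, ?_⟩
  have key : p ^ N = (X ^ 2 - X) ^ N * g ^ N := by
    rw [hg, mul_pow]
  have := congrArg (Polynomial.aeval e) key
  simp only [hp, map_pow, map_mul, map_sub, map_one, Polynomial.aeval_X] at this
  rw [this, h, zero_mul]
end

section
/- Let R be a (possibly noncommutative) ring and let ℓ, Λ ∈ R be such that e := ℓ·Λ satisfies: e^2 − e is nilpotent. Then there exists Λ' ∈ R such that ℓ·Λ' is idempotent and ℓ·Λ' − e is nilpotent. -/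
/-!
The idempotent is the classical lift `f = 1 - (1 - e ^ n) ^ n`, where `(e - e ^ 2) ^ n = 0`
(`isIdempotentElem_one_sub_one_sub_pow_pow`). It is a polynomial in `e` without constant
term, hence of the form `e * c = ℓ * (Λ * c)`. Modulo the nilradical of the commutative
subring generated by `e`, the image of `e` is idempotent and `f` maps to it, so `f - e` is
nilpotent.
-/

open scoped IsMulCommutative

theorem isNilpotent_one_sub_one_sub_pow_pow_sub_of_commRing {A : Type*} [CommRing A] {x : A}
    (hx : IsNilpotent (x - x ^ 2)) {n : ℕ} (hn : n ≠ 0) :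
    IsNilpotent (1 - (1 - x ^ n) ^ n - x) := by
  let π := Ideal.Quotient.mk (nilradical A)
  have hπx : IsIdempotentElem (π x) := by
    rw [IsIdempotentElem, ← sq, eq_comm, ← sub_eq_zero, ← map_pow, ← map_sub,
      Ideal.Quotient.eq_zero_iff_mem, mem_nilradical]
    exact hx
  obtain ⟨k, rfl⟩ := Nat.exists_eq_succ_of_ne_zero hn
  rw [← mem_nilradical, ← Ideal.Quotient.eq_zero_iff_mem]
  simp only [π, map_sub, map_one, map_pow, hπx.pow_succ_eq, hπx.one_sub.pow_succ_eq,
    sub_sub_cancel, sub_self]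

theorem isNilpotent_one_sub_one_sub_pow_pow_sub {R : Type*} [Ring R] {x : R}
    (hx : IsNilpotent (x - x ^ 2)) {n : ℕ} (hn : n ≠ 0) :
    IsNilpotent (1 - (1 - x ^ n) ^ n - x) := by
  have : IsMulCommutative (Subring.closure {x}) := Subring.isMulCommutative_closure (by simp)
  let ι := (Subring.closure {x}).subtype
  let a : Subring.closure {x} := ⟨x, Subring.subset_closure rfl⟩
  have ha : IsNilpotent (a - a ^ 2) := by
    rwa [← IsNilpotent.map_iff (f := ι) Subtype.val_injective]
  exact (isNilpotent_one_sub_one_sub_pow_pow_sub_of_commRing ha hn).map ι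

theorem dvd_one_sub_one_sub_pow_pow {R : Type*} [Ring R] (x : R) {n : ℕ} (hn : n ≠ 0) :
    x ∣ 1 - (1 - x ^ n) ^ n := by
  have h := (Commute.one_left (1 - x ^ n)).sub_dvd_pow_sub_pow n
  rw [one_pow, sub_sub_cancel] at h
  exact (dvd_pow_self x hn).trans h

theorem exists_isIdempotentElem_mul_isNilpotent_sub {R : Type*} [Ring R] {x : R}
    (hx : IsNilpotent (x - x ^ 2)) :
    ∃ c : R, IsIdempotentElem (x * c) ∧ IsNilpotent (x * c - x) := by
  obtain ⟨n, hn⟩ := hx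
  have hn' : (x - x ^ 2) ^ (n + 1) = 0 := pow_eq_zero_of_le n.le_succ hn
  obtain ⟨c, hc⟩ := dvd_one_sub_one_sub_pow_pow x n.succ_ne_zero
  refine ⟨c, ?_, ?_⟩
  · rw [← hc]
    exact isIdempotentElem_one_sub_one_sub_pow_pow x _ hn'
  · rw [← hc]
    exact isNilpotent_one_sub_one_sub_pow_pow_sub ⟨n, hn⟩ n.succ_ne_zero

/-- If `e := ℓ * Λ` has nilpotent `e^2 - e`, then there is `Λ'` such that `ℓ * Λ'` is
idempotent and `ℓ * Λ' - e` is nilpotent. -/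
theorem stmt_4 {R : Type*} [Ring R] (ℓ Λ : R)
    (h : IsNilpotent ((ℓ * Λ) ^ 2 - ℓ * Λ)) :
    ∃ Λ' : R, (ℓ * Λ') * (ℓ * Λ') = ℓ * Λ' ∧ IsNilpotent (ℓ * Λ' - ℓ * Λ) := by
  obtain ⟨c, hidem, hnil⟩ := exists_isIdempotentElem_mul_isNilpotent_sub (x := ℓ * Λ)
    (by simpa only [neg_sub] using h.neg)
  refine ⟨Λ * c, ?_, ?_⟩
  · simpa only [mul_assoc] using hidem.eq
  · simpa only [mul_assoc] using hnil
end
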